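/- Let Θ ⊂ ℝ³ be a compact set with nonempty interior and Ω = ℝ³ ∖ Θ. Let Q : ℝ³ → ℝ be an everywhere positive function with Q, ∇Q ∈ L²(ℝ³) and Q ∈ L⁴(ℝ³), and set C_GN := ‖Q‖⁴_{L⁴} / (‖∇Q‖³_{L²} ‖Q‖_{L²}). Assume: (i) for every u : ℝ³ → ℂ with u ∈ L² ∩ L⁴ and ∇u ∈ L², ‖u‖⁴_{L⁴} ≤ C_GN ‖∇u‖³_{L²} ‖u‖_{L²}; (ii) every such u attaining equality is of the form u(x) = λ₀ Q(μ₀(x + x₀)) for some λ₀ ∈ ℂ ∖ {0}, μ₀ > 0, x₀ ∈ ℝ³. Then there is no u₀ ∈ H¹₀(Ω) satisfying both E[u₀] M[u₀] = E[Q] M[Q] and ‖u₀‖_{L²(ℝ³)} ‖∇u₀‖_{L²(ℝ³)} = ‖Q‖_{L²(ℝ³)} ‖∇Q‖_{L²(ℝ³)}. -/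
import Mathlib


noncomputable section

open MeasureTheory Real

abbrev R3 : Type := EuclideanSpace ℝ (Fin 3)

/-- An ℂ-valued function on ℝ³ lying in L² ∩ L⁴ with gradient in L². -/
def GoodFun (u : R3 → ℂ) : Prop :=
  Differentiable ℝ u ∧ Integrable (fun x => ‖u x‖ ^ 2) ∧
    Integrable (fun x => ‖u x‖ ^ 4) ∧ Integrable (fun x => ‖fderiv ℝ u x‖ ^ 2)

/-- Mass. -/
def Mass (u : R3 → ℂ) : ℝ := ∫ x : R3, ‖u x‖ ^ 2

/-- Energy. -/
def Energy (u : R3 → ℂ) : ℝ :=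
  (1 / 2) * (∫ x : R3, ‖fderiv ℝ u x‖ ^ 2) - (1 / 4) * ∫ x : R3, ‖u x‖ ^ 4

/-- L² norm. -/
def L2norm (u : R3 → ℂ) : ℝ := (∫ x : R3, ‖u x‖ ^ 2) ^ ((1 : ℝ) / 2)

/-- L² norm of the gradient. -/
def L2gradNorm (u : R3 → ℂ) : ℝ := (∫ x : R3, ‖fderiv ℝ u x‖ ^ 2) ^ ((1 : ℝ) / 2)


lemma sq_rpow_half {a : ℝ} (ha : 0 ≤ a) : (a ^ ((1:ℝ)/2)) ^ (2:ℕ) = a := by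
  rw [← Real.rpow_natCast (a ^ ((1:ℝ)/2)) 2, ← Real.rpow_mul ha]
  norm_num

theorem no_threshold_function_in_exterior_domain
    (Θ : Set R3) (hΘ : IsCompact Θ) (hΘint : (interior Θ).Nonempty)
    (Q : R3 → ℝ) (hQpos : ∀ x : R3, 0 < Q x)
    (hQdiff : Differentiable ℝ Q)
    (hQL2 : Integrable (fun x => (Q x) ^ 2)) (hQL4 : Integrable (fun x => (Q x) ^ 4))
    (hQgradL2 : Integrable (fun x => ‖fderiv ℝ Q x‖ ^ 2))
    (C_GN : ℝ)
    (hCGN : C_GN = (∫ x : R3, (Q x) ^ 4) /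
      ((∫ x : R3, ‖fderiv ℝ Q x‖ ^ 2) ^ ((3 : ℝ) / 2) * (∫ x : R3, (Q x) ^ 2) ^ ((1 : ℝ) / 2)))
    (hGN : ∀ u : R3 → ℂ, GoodFun u →
      (∫ x : R3, ‖u x‖ ^ 4) ≤
        C_GN * (∫ x : R3, ‖fderiv ℝ u x‖ ^ 2) ^ ((3 : ℝ) / 2) *
          (∫ x : R3, ‖u x‖ ^ 2) ^ ((1 : ℝ) / 2))
    (hEq : ∀ u : R3 → ℂ, GoodFun u →
      (∫ x : R3, ‖u x‖ ^ 4) =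
        C_GN * (∫ x : R3, ‖fderiv ℝ u x‖ ^ 2) ^ ((3 : ℝ) / 2) *
          (∫ x : R3, ‖u x‖ ^ 2) ^ ((1 : ℝ) / 2) →
      ∃ (lam₀ : ℂ) (μ₀ : ℝ), lam₀ ≠ 0 ∧ 0 < μ₀ ∧ ∃ x₀ : R3,
        ∀ x : R3, u x = lam₀ * (Q (μ₀ • (x + x₀)) : ℂ)) :
    ¬ ∃ u₀ : R3 → ℂ, GoodFun u₀ ∧ (∀ᵐ x : R3, x ∈ Θ → u₀ x = 0) ∧
      Energy u₀ * Mass u₀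
        = Energy (fun x => (Q x : ℂ)) * Mass (fun x => (Q x : ℂ)) ∧
      L2norm u₀ * L2gradNorm u₀
        = L2norm (fun x => (Q x : ℂ)) * L2gradNorm (fun x => (Q x : ℂ)) := by
  rintro ⟨u₀, hgood, hzero, hEM, hNorm⟩
  set QC : R3 → ℂ := fun x => (Q x : ℂ) with hQCdef
  have habs : ∀ x, ‖QC x‖ = Q x := fun x => by
    simp [QC, abs_of_pos (hQpos x)]
  have hfderivQC : ∀ x, fderiv ℝ QC x = Complex.ofRealCLM.comp (fderiv ℝ Q x) := fun x =>
    (Complex.ofRealCLM.hasFDerivAt.comp x (hQdiff x).hasFDerivAt).fderiv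
  have hgnorm : ∀ x, ‖fderiv ℝ QC x‖ = ‖fderiv ℝ Q x‖ := fun x => by
    rw [hfderivQC x]
    exact Complex.ofRealLI.norm_toContinuousLinearMap_comp
  have hI2 : (∫ x : R3, ‖QC x‖ ^ 2) = ∫ x : R3, (Q x) ^ 2 := by
    simp only [habs]
  have hI4 : (∫ x : R3, ‖QC x‖ ^ 4) = ∫ x : R3, (Q x) ^ 4 := by
    simp only [habs]
  have hIG : (∫ x : R3, ‖fderiv ℝ QC x‖ ^ 2) = ∫ x : R3, ‖fderiv ℝ Q x‖ ^ 2 := by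
    simp only [hgnorm]
  have hQCgood : GoodFun QC := by
    refine ⟨Complex.ofRealCLM.differentiable.comp hQdiff, ?_, ?_, ?_⟩
    · exact hQL2.congr (Filter.Eventually.of_forall fun x => by simp only [habs])
    · exact hQL4.congr (Filter.Eventually.of_forall fun x => by simp only [habs])
    · exact hQgradL2.congr (Filter.Eventually.of_forall fun x => by simp only [hgnorm])
  set MQ := ∫ x : R3, (Q x) ^ 2 with hMQdef
  set GQ := ∫ x : R3, ‖fderiv ℝ Q x‖ ^ 2 with hGQdef
  set PQ := ∫ x : R3, (Q x) ^ 4 with hPQdef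
  set M := ∫ x : R3, ‖u₀ x‖ ^ 2 with hMdef
  set G := ∫ x : R3, ‖fderiv ℝ u₀ x‖ ^ 2 with hGdef
  set P := ∫ x : R3, ‖u₀ x‖ ^ 4 with hPdef
  have hM0 : 0 ≤ M := integral_nonneg fun x => by positivity
  have hG0 : 0 ≤ G := integral_nonneg fun x => by positivity
  have hP0 : 0 ≤ P := integral_nonneg fun x => by positivity
  have hGQ0 : 0 ≤ GQ := integral_nonneg fun x => by positivity
  -- positivity of MQ, PQ
  have hsupp : ∀ (n : ℕ), 0 < n → Function.support (fun x : R3 => (Q x) ^ n) = Set.univ := by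
    intro n hn
    ext x
    simp [Function.support, pow_ne_zero_iff hn.ne', (hQpos x).ne']
  have hvol : (0 : ENNReal) < volume (Set.univ : Set R3) :=
    isOpen_univ.measure_pos volume ⟨0, trivial⟩
  have hMQpos : 0 < MQ := by
    rw [hMQdef]
    rw [integral_pos_iff_support_of_nonneg (fun x => by positivity) hQL2]
    rw [hsupp 2 (by norm_num)]; exact hvol
  have hPQpos : 0 < PQ := by
    rw [hPQdef]
    rw [integral_pos_iff_support_of_nonneg (fun x => by positivity) hQL4]
    rw [hsupp 4 (by norm_num)]; exact hvol
  have hGQpos : 0 < GQ := by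
    rcases hGQ0.lt_or_eq with h | h
    · exact h
    · exfalso
      have hC0 : C_GN = 0 := by
        rw [hCGN, ← h, Real.zero_rpow (by norm_num : (3:ℝ)/2 ≠ 0), zero_mul, div_zero]
      have := hGN QC hQCgood
      rw [hI2, hI4, hIG, hC0] at this
      simp only [zero_mul] at this
      exact absurd (lt_of_lt_of_le hPQpos this) (lt_irrefl 0)
  -- equality case for Q itself
  have hPQ_eq : PQ = C_GN * GQ ^ ((3:ℝ)/2) * MQ ^ ((1:ℝ)/2) := by
    have hGQr : (0:ℝ) < GQ ^ ((3:ℝ)/2) := Real.rpow_pos_of_pos hGQpos _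
    have hMQr : (0:ℝ) < MQ ^ ((1:ℝ)/2) := Real.rpow_pos_of_pos hMQpos _
    rw [hCGN, mul_assoc, div_mul_cancel₀ _ (mul_pos hGQr hMQr).ne']
  -- from the norm hypothesis
  have hNorm' : M ^ ((1:ℝ)/2) * G ^ ((1:ℝ)/2) = MQ ^ ((1:ℝ)/2) * GQ ^ ((1:ℝ)/2) := by
    have := hNorm
    simp only [L2norm, L2gradNorm] at this
    rw [hI2, hIG] at this
    exact this
  have hMG : M * G = MQ * GQ := by
    have h2 := congrArg (· ^ (2:ℕ)) hNorm'
    simp only [mul_pow] at h2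
    rwa [sq_rpow_half hM0, sq_rpow_half hG0, sq_rpow_half hMQpos.le,
      sq_rpow_half hGQpos.le] at h2
  -- from the energy-mass hypothesis
  have hEM' : ((1:ℝ)/2 * G - 1/4 * P) * M = ((1:ℝ)/2 * GQ - 1/4 * PQ) * MQ := by
    have := hEM
    simp only [Energy, Mass] at this
    rw [hI2, hI4, hIG] at this
    exact this
  have hPM : P * M = PQ * MQ := by nlinarith [hEM', hMG]
  have hMpos : 0 < M := by
    rcases hM0.lt_or_eq with h | h
    · exact h
    · exfalso
      have : M * G = 0 := by rw [← h, zero_mul]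
      rw [hMG] at this
      exact absurd this (mul_pos hMQpos hGQpos).ne'
  -- derive equality in GN for u₀
  have key : P = C_GN * G ^ ((3:ℝ)/2) * M ^ ((1:ℝ)/2) := by
    have h32 : ∀ a : ℝ, 0 < a → a ^ ((3:ℝ)/2) = a ^ ((1:ℝ)/2) * a := by
      intro a ha
      rw [show ((3:ℝ)/2) = (1:ℝ)/2 + 1 by norm_num, Real.rpow_add ha, Real.rpow_one]
    have hGM32 : (M * G) ^ ((3:ℝ)/2) = (MQ * GQ) ^ ((3:ℝ)/2) := by rw [hMG]
    have hsplit : ∀ a b : ℝ, 0 ≤ a → 0 ≤ b → (a * b) ^ ((3:ℝ)/2) = a ^ ((3:ℝ)/2) * b ^ ((3:ℝ)/2) :=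
      fun a b ha hb => Real.mul_rpow ha hb
    have hGpos : 0 < G := by
      rcases hG0.lt_or_eq with h | h
      · exact h
      · exfalso
        have : M * G = 0 := by rw [← h, mul_zero]
        rw [hMG] at this
        exact absurd this (mul_pos hMQpos hGQpos).ne'
    have e1 : P * M = C_GN * G ^ ((3:ℝ)/2) * M ^ ((1:ℝ)/2) * M := by
      rw [hPM, hPQ_eq]
      have : C_GN * GQ ^ ((3:ℝ)/2) * MQ ^ ((1:ℝ)/2) * MQ
          = C_GN * (GQ ^ ((3:ℝ)/2) * (MQ ^ ((1:ℝ)/2) * MQ)) := by ring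
      rw [this, ← h32 MQ hMQpos, ← Real.mul_rpow hGQ0 hMQpos.le, mul_comm GQ MQ, ← hMG,
        mul_comm M G, Real.mul_rpow hGpos.le hMpos.le, h32 M hMpos]
      ring
    exact mul_right_cancel₀ hMpos.ne' e1
  obtain ⟨lam₀, μ₀, hlam, hμ, x₀, hform⟩ := hEq u₀ hgood key
  have hne : ∀ x : R3, u₀ x ≠ 0 := by
    intro x
    rw [hform x]
    exact mul_ne_zero hlam (Complex.ofReal_ne_zero.mpr (hQpos _).ne')
  have hΘ0 : volume Θ = 0 := by
    rw [measure_eq_zero_iff_ae_notMem]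
    filter_upwards [hzero] with x hx hxΘ
    exact hne x (hx hxΘ)
  have hpos : 0 < volume (interior Θ) :=
    isOpen_interior.measure_pos volume hΘint
  have : volume (interior Θ) ≤ volume Θ := measure_mono interior_subset
  rw [hΘ0] at this
  exact absurd (lt_of_lt_of_le hpos this) (lt_irrefl 0)
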